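/- Bailey's transform: if β_n = Σ_{r=0}^n α_r u_{n-r} v_{n+r} and γ_n = Σ_{r=n}^∞ δ_r u_{r-n} v_{r+n}, and all relevant series converge absolutely, then Σ_{n=0}^∞ α_n γ_n = Σ_{n=0}^∞ β_n δ_n. -/

import Mathlib

/-!
Both sides are iterated sums of the absolutely summable double family
`(r, j) ↦ α r * δ (r + j) * u j * v (2 * r + j)`: the left side sums it row by row,
the right side along the antidiagonals `r + j = n`.
-/

open Finset

theorem Summable.tsum_eq_tsum_sum_antidiagonal {A M : Type*} [AddCommMonoid A] [HasAntidiagonal A]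
    [AddCommMonoid M] [TopologicalSpace M] [ContinuousAdd M] [T3Space M] {f : A × A → M}
    (hf : Summable f) : ∑' x, f x = ∑' n, ∑ kl ∈ antidiagonal n, f kl := by
  conv_rhs => congr; ext; rw [← Finset.sum_finset_coe, ← tsum_fintype (L := .unconditional _)]
  rw [← HasAntidiagonal.sigmaAntidiagonalEquivProd.tsum_eq f]
  exact (HasAntidiagonal.sigmaAntidiagonalEquivProd.summable_iff.mpr hf).tsum_sigma'
    fun _ => (hasSum_fintype _).summable

/-- Bailey's transform: if `β n = ∑_{r=0}^n α r * u (n-r) * v (n+r)` and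
`γ n = ∑_{r=n}^∞ δ r * u (r-n) * v (r+n)` (here reindexed by `r = n + j`), and the
relevant double series converges absolutely, then `∑ α n γ n = ∑ β n δ n`. -/
theorem bailey_transform (α β γ δ u v : ℕ → ℂ)
    (hβ : ∀ n, β n = ∑ r ∈ Finset.range (n + 1), α r * u (n - r) * v (n + r))
    (hγ : ∀ n, γ n = ∑' j : ℕ, δ (n + j) * u j * v (2 * n + j))
    (habs : Summable fun p : ℕ × ℕ => ‖α p.1 * δ (p.1 + p.2) * u p.2 * v (2 * p.1 + p.2)‖) :
    ∑' n, α n * γ n = ∑' n, β n * δ n := by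
  set f : ℕ × ℕ → ℂ := fun p => α p.1 * δ (p.1 + p.2) * u p.2 * v (2 * p.1 + p.2)
  have hf : Summable f := habs.of_norm
  have hβδ (n : ℕ) : β n * δ n = ∑ kl ∈ antidiagonal n, f kl := by
    rw [hβ, ← Nat.sum_antidiagonal_eq_sum_range_succ fun i j => α i * u j * v (n + i), sum_mul]
    refine sum_congr rfl fun kl hkl => ?_
    obtain rfl := mem_antidiagonal.mp hkl
    simp only [f, show kl.1 + kl.2 + kl.1 = 2 * kl.1 + kl.2 by ring]
    ring
  calc ∑' n, α n * γ n = ∑' n, ∑' j, f (n, j) := by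
        simp only [hγ, ← tsum_mul_left, f, mul_assoc]
    _ = ∑' p, f p := (hf.tsum_prod' hf.prod_factor).symm
    _ = ∑' n, ∑ kl ∈ antidiagonal n, f kl := hf.tsum_eq_tsum_sum_antidiagonal
    _ = ∑' n, β n * δ n := by simp only [hβδ]
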